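/- Let m ≥ 1 be a natural number, ϖ_m = 2∫_0^1 (1-t^m)^(-1/2) dt, and let φ : ℝ → ℝ satisfy: x = ∫_0^{φ(x)} (1-t^m)^(-1/2) dt and 0 ≤ φ(x) ≤ 1 for all x ∈ [0, ϖ_m/2], and φ(ϖ_m - x) = φ(x) for all x ∈ [0, ϖ_m]. Define I(n) = ∫_0^{ϖ_m} φ(x)^n dx, and define Γ_2(n,k) by Γ_2(0,k) = 1, Γ_2(1,0) = 1, and Γ_2(n+1,k) = (2n+k)·Γ_2(n,k). Then for all natural numbers n ≥ 1, I(mn - 1)·Γ_2(n,1) = Γ_2(n,0)·(4/m). -/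

import Mathlib

/-!
Write `l(r) = ∫₀ʳ (1 - tᵐ)^(-1/2) dt`, so that `φ ∘ l = id` on `[0, 1]` and `l(1) = ϖ/2`.
The substitution `x = l(r)` turns `∫₀^{ϖ/2} φᵏ` into the moment
`Jₖ = ∫₀¹ rᵏ (1 - rᵐ)^(-1/2) dr`, and the symmetry `φ(ϖ - x) = φ(x)` doubles it, so
`I(k) = 2 Jₖ`. Differentiating `r^(j+1) √(1 - rᵐ)` gives the recurrence
`(j + 1) Jⱼ = (j + 1 + m/2) J_{j+m}`, and differentiating `√(1 - rᵐ)` gives `J_{m-1} = 2/m`;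
induction on `n` then produces the ratio `Γ₂(n,0) / Γ₂(n,1)`.
-/

noncomputable def congGamma2 : ℕ → ℕ → ℝ
  | 0, _ => 1
  | n + 1, k => if n = 0 ∧ k = 0 then 1 else ((2 * n + k : ℕ) : ℝ) * congGamma2 n k

open MeasureTheory intervalIntegral Set

theorem integral_eq_two_mul_integral_half_of_symm {f : ℝ → ℝ} {a : ℝ} (ha : 0 ≤ a)
    (hsymm : ∀ x ∈ Icc 0 a, f (a - x) = f x) (hf : IntervalIntegrable f volume 0 (a / 2)) :
    ∫ x in 0..a, f x = 2 * ∫ x in 0..a / 2, f x := by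
  have hreflect : EqOn (fun x => f (a - x)) f (uIcc (a / 2) a) := fun x hx => by
    rw [uIcc_of_le (by linarith)] at hx
    exact hsymm x ⟨by linarith [hx.1], hx.2⟩
  have hf' : IntervalIntegrable f volume (a / 2) a := by
    have := (hf.comp_sub_left a).symm
    rw [sub_zero, sub_half] at this
    exact this.congr (hreflect.mono uIoc_subset_uIcc)
  have hupper : ∫ x in a / 2..a, f x = ∫ x in 0..a / 2, f x := by
    rw [← integral_congr hreflect, integral_comp_sub_left, sub_self, sub_half]
  rw [← integral_add_adjacent_intervals hf hf', hupper, two_mul]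

theorem intervalIntegrable_pow_mul_one_sub_pow_rpow {m : ℕ} (hm : 1 ≤ m) (k : ℕ) {p : ℝ}
    (hp : -1 < p) (hp0 : p ≤ 0) :
    IntervalIntegrable (fun t : ℝ => t ^ k * (1 - t ^ m) ^ p) volume 0 1 := by
  have hdom : IntervalIntegrable (fun t : ℝ => (1 - t) ^ p) volume 0 1 := by
    simpa using ((intervalIntegrable_rpow' (a := 0) (b := 1) hp).comp_sub_left 1).symm
  refine hdom.mono_fun (by fun_prop) ?_
  filter_upwards [ae_restrict_mem measurableSet_uIoc] with t ht
  rw [uIoc_of_le zero_le_one] at ht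
  obtain ⟨ht0, ht1⟩ := ht
  rcases ht1.eq_or_lt with rfl | ht1
  · simp
  have hpow : t ^ m ≤ t := pow_le_of_le_one ht0.le ht1.le (by omega)
  have hbase : 0 ≤ 1 - t ^ m := by linarith
  rw [Real.norm_of_nonneg (by positivity), Real.norm_of_nonneg (by positivity)]
  calc t ^ k * (1 - t ^ m) ^ p ≤ 1 * (1 - t) ^ p :=
        mul_le_mul (pow_le_one₀ ht0.le ht1.le)
          (Real.rpow_le_rpow_of_nonpos (by linarith) (by linarith) hp0) (by positivity) zero_le_one
    _ = (1 - t) ^ p := one_mul _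

theorem congGamma2_succ_one (n : ℕ) : congGamma2 (n + 1) 1 = (2 * n + 1) * congGamma2 n 1 := by
  simp [congGamma2]

theorem congGamma2_succ_zero {n : ℕ} (hn : n ≠ 0) :
    congGamma2 (n + 1) 0 = 2 * n * congGamma2 n 0 := by
  simp [congGamma2, hn]

theorem one_sub_pow_pos {m : ℕ} (hm : 1 ≤ m) {r : ℝ} (hr : r ∈ Ioo 0 1) :
    0 < 1 - r ^ m := by
  linarith [pow_lt_one₀ hr.1.le hr.2 (by omega : m ≠ 0)]

theorem hasDerivAt_one_sub_pow_rpow_half (m : ℕ) {r : ℝ} (hr : 0 < 1 - r ^ m) :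
    HasDerivAt (fun r : ℝ => (1 - r ^ m) ^ (1 / 2 : ℝ))
      (-(m / 2) * (r ^ (m - 1) * (1 - r ^ m) ^ (-(1 / 2) : ℝ))) r := by
  have h := ((hasDerivAt_pow m r).const_sub 1).rpow_const (p := 1 / 2) (Or.inl hr.ne')
  convert h using 1
  norm_num
  ring

theorem one_sub_pow_rpow_half (m : ℕ) {r : ℝ} (hr : 0 < 1 - r ^ m) :
    (1 - r ^ m) ^ (1 / 2 : ℝ) = (1 - r ^ m) * (1 - r ^ m) ^ (-(1 / 2) : ℝ) := by
  conv_lhs => rw [show (1 / 2 : ℝ) = 1 + -(1 / 2) by norm_num]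
  rw [Real.rpow_add hr, Real.rpow_one]

noncomputable def cloverMoment (m k : ℕ) : ℝ :=
  ∫ t in (0 : ℝ)..1, t ^ k * (1 - t ^ m) ^ (-(1 / 2) : ℝ)

theorem intervalIntegrable_cloverMoment_integrand {m : ℕ} (hm : 1 ≤ m) (k : ℕ) :
    IntervalIntegrable (fun t : ℝ => t ^ k * (1 - t ^ m) ^ (-(1 / 2) : ℝ)) volume 0 1 :=
  intervalIntegrable_pow_mul_one_sub_pow_rpow hm k (by norm_num) (by norm_num)

theorem cloverMoment_sub_one {m : ℕ} (hm : 1 ≤ m) : cloverMoment m (m - 1) = 2 / m := by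
  have hcont : ContinuousOn (fun r : ℝ => (1 - r ^ m) ^ (1 / 2 : ℝ)) (Icc 0 1) :=
    (continuous_const.sub (continuous_pow m)).continuousOn.rpow_const fun _ _ => by norm_num
  have hFTC := integral_eq_sub_of_hasDerivAt_of_le zero_le_one hcont
    (fun r hr => hasDerivAt_one_sub_pow_rpow_half m (one_sub_pow_pos hm hr))
    ((intervalIntegrable_cloverMoment_integrand hm (m - 1)).const_mul _)
  have hboundary : ((1 : ℝ) - 1 ^ m) ^ (1 / 2 : ℝ) - (1 - 0 ^ m) ^ (1 / 2 : ℝ) = -1 := by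
    simp [zero_pow (by omega : m ≠ 0)]
  rw [intervalIntegral.integral_const_mul, hboundary] at hFTC
  have hm0 : (m : ℝ) ≠ 0 := by positivity
  unfold cloverMoment
  field_simp
  linarith

theorem cloverMoment_recurrence {m : ℕ} (hm : 1 ≤ m) (j : ℕ) :
    (j + 1 : ℝ) * cloverMoment m j = (j + 1 + m / 2) * cloverMoment m (j + m) := by
  have hcont : ContinuousOn (fun r : ℝ => r ^ (j + 1) * (1 - r ^ m) ^ (1 / 2 : ℝ)) (Icc 0 1) :=
    (continuous_pow _).continuousOn.mul <|
      (continuous_const.sub (continuous_pow m)).continuousOn.rpow_const fun _ _ => by norm_num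
  have hderiv : ∀ r ∈ Ioo (0 : ℝ) 1,
      HasDerivAt (fun r : ℝ => r ^ (j + 1) * (1 - r ^ m) ^ (1 / 2 : ℝ))
      ((j + 1) * (r ^ j * (1 - r ^ m) ^ (-(1 / 2) : ℝ))
        - (j + 1 + m / 2) * (r ^ (j + m) * (1 - r ^ m) ^ (-(1 / 2) : ℝ))) r := by
    intro r hr
    have hrm := one_sub_pow_pos hm hr
    refine ((hasDerivAt_pow (j + 1) r).mul (hasDerivAt_one_sub_pow_rpow_half m hrm)).congr_deriv ?_
    obtain ⟨m₀, rfl⟩ : ∃ m₀, m = m₀ + 1 := ⟨m - 1, by omega⟩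
    rw [one_sub_pow_rpow_half _ hrm]
    push_cast
    ring
  have hboundary : (1 : ℝ) ^ (j + 1) * (1 - 1 ^ m) ^ (1 / 2 : ℝ)
      - 0 ^ (j + 1) * (1 - 0 ^ m) ^ (1 / 2 : ℝ) = 0 := by
    simp
  have hFTC := integral_eq_sub_of_hasDerivAt_of_le zero_le_one hcont hderiv
    (((intervalIntegrable_cloverMoment_integrand hm j).const_mul _).sub
      ((intervalIntegrable_cloverMoment_integrand hm (j + m)).const_mul _))
  rw [integral_sub ((intervalIntegrable_cloverMoment_integrand hm j).const_mul _)
    ((intervalIntegrable_cloverMoment_integrand hm (j + m)).const_mul _),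
    intervalIntegral.integral_const_mul, intervalIntegral.integral_const_mul, hboundary] at hFTC
  unfold cloverMoment
  linarith

theorem cloverMoment_mul_sub_one {m : ℕ} (hm : 1 ≤ m) (n : ℕ) (hn : 1 ≤ n) :
    cloverMoment m (m * n - 1) * congGamma2 n 1 = congGamma2 n 0 * (2 / m) := by
  induction n, hn using Nat.le_induction with
  | base => simp [cloverMoment_sub_one hm, congGamma2]
  | succ n hn ih =>
    have hmn : 1 ≤ m * n := Nat.mul_pos hm hn
    have hstep := cloverMoment_recurrence hm (m * n - 1)
    rw [show m * n - 1 + m = m * (n + 1) - 1 by rw [Nat.mul_succ]; omega,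
      Nat.cast_sub hmn] at hstep
    push_cast at hstep
    have hratio : (2 * n + 1 : ℝ) * cloverMoment m (m * (n + 1) - 1)
        = 2 * n * cloverMoment m (m * n - 1) := by
      refine mul_left_cancel₀ (by positivity : (m : ℝ) / 2 ≠ 0) ?_
      linear_combination -hstep
    rw [congGamma2_succ_one, congGamma2_succ_zero (by omega)]
    linear_combination congGamma2 n 1 * hratio + 2 * n * ih

noncomputable def cloverArcLength (m : ℕ) (r : ℝ) : ℝ :=
  ∫ t in (0 : ℝ)..r, (1 - t ^ m) ^ (-(1 / 2) : ℝ)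

section ArcLength

variable {m : ℕ}

theorem intervalIntegrable_cloverArcLength_integrand (hm : 1 ≤ m) :
    IntervalIntegrable (fun t : ℝ => (1 - t ^ m) ^ (-(1 / 2) : ℝ)) volume 0 1 := by
  simpa using intervalIntegrable_cloverMoment_integrand hm 0

theorem hasDerivAt_cloverArcLength (hm : 1 ≤ m) {r : ℝ} (hr : r ∈ Ioo 0 1) :
    HasDerivAt (cloverArcLength m) ((1 - r ^ m) ^ (-(1 / 2) : ℝ)) r := by
  refine integral_hasDerivAt_right ((intervalIntegrable_cloverArcLength_integrand hm).mono_set ?_)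
    (by fun_prop : Measurable _).stronglyMeasurable.stronglyMeasurableAtFilter
    ((by fun_prop : ContinuousAt (fun t : ℝ => 1 - t ^ m) r).rpow_const
      (Or.inl (one_sub_pow_pos hm hr).ne'))
  rw [uIcc_of_le hr.1.le, uIcc_of_le zero_le_one]
  exact Icc_subset_Icc le_rfl hr.2.le

theorem continuousOn_cloverArcLength (hm : 1 ≤ m) :
    ContinuousOn (cloverArcLength m) (Icc 0 1) := by
  have h := continuousOn_primitive_interval <|
    (intervalIntegrable_iff' (a := 0) (b := 1)).1 (intervalIntegrable_cloverArcLength_integrand hm)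
  rwa [uIcc_of_le zero_le_one] at h

theorem strictMonoOn_cloverArcLength (hm : 1 ≤ m) :
    StrictMonoOn (cloverArcLength m) (Icc 0 1) := by
  refine strictMonoOn_of_deriv_pos (convex_Icc 0 1) (continuousOn_cloverArcLength hm) fun r hr => ?_
  rw [interior_Icc] at hr
  rw [(hasDerivAt_cloverArcLength hm hr).deriv]
  exact Real.rpow_pos_of_pos (one_sub_pow_pos hm hr) _

theorem cloverArcLength_zero : cloverArcLength m 0 = 0 := integral_same

theorem cloverArcLength_one_pos (hm : 1 ≤ m) : 0 < cloverArcLength m 1 :=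
  cloverArcLength_zero (m := m) ▸
    strictMonoOn_cloverArcLength hm ⟨le_rfl, zero_le_one⟩ ⟨zero_le_one, le_rfl⟩ zero_lt_one

theorem image_cloverArcLength_Ioo (hm : 1 ≤ m) :
    cloverArcLength m '' Ioo 0 1 = Ioo 0 (cloverArcLength m 1) := by
  refine Subset.antisymm ?_ ?_
  · rintro _ ⟨r, hr, rfl⟩
    have hmono := strictMonoOn_cloverArcLength hm
    rw [← cloverArcLength_zero (m := m)]
    exact ⟨hmono ⟨le_rfl, zero_le_one⟩ (Ioo_subset_Icc_self hr) hr.1,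
      hmono (Ioo_subset_Icc_self hr) ⟨zero_le_one, le_rfl⟩ hr.2⟩
  · simpa [cloverArcLength_zero] using
      intermediate_value_Ioo zero_le_one (continuousOn_cloverArcLength hm)

/-- The open interval avoids `r = 1`, where `cloverArcLength m` has infinite derivative. -/
theorem integral_Ioo_eq_integral_comp_cloverArcLength (hm : 1 ≤ m) (g : ℝ → ℝ) :
    ∫ x in Ioo 0 (cloverArcLength m 1), g x
      = ∫ r in Ioo 0 1, (1 - r ^ m) ^ (-(1 / 2) : ℝ) * g (cloverArcLength m r) := by
  rw [← image_cloverArcLength_Ioo hm, integral_image_eq_integral_abs_deriv_smul measurableSet_Ioo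
    (fun r hr => (hasDerivAt_cloverArcLength hm hr).hasDerivWithinAt)
    ((strictMonoOn_cloverArcLength hm).injOn.mono Ioo_subset_Icc_self)]
  refine setIntegral_congr_fun measurableSet_Ioo fun r hr => ?_
  rw [smul_eq_mul, abs_of_nonneg (Real.rpow_nonneg ((one_sub_pow_pos hm hr).le) _)]

theorem integrableOn_Ioo_iff_integrableOn_comp_cloverArcLength (hm : 1 ≤ m) (g : ℝ → ℝ) :
    IntegrableOn g (Ioo 0 (cloverArcLength m 1))
      ↔ IntegrableOn (fun r => (1 - r ^ m) ^ (-(1 / 2) : ℝ) * g (cloverArcLength m r))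
          (Ioo 0 1) := by
  rw [← image_cloverArcLength_Ioo hm,
    integrableOn_image_iff_integrableOn_abs_deriv_smul measurableSet_Ioo
    (fun r hr => (hasDerivAt_cloverArcLength hm hr).hasDerivWithinAt)
    ((strictMonoOn_cloverArcLength hm).injOn.mono Ioo_subset_Icc_self)]
  refine integrableOn_congr_fun (fun r hr => ?_) measurableSet_Ioo
  rw [smul_eq_mul, abs_of_nonneg (Real.rpow_nonneg ((one_sub_pow_pos hm hr).le) _)]

end ArcLength

section CloverFunction

variable {m : ℕ} {φ : ℝ → ℝ}

theorem clover_cloverArcLength (hm : 1 ≤ m)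
    (hφ : ∀ x ∈ Icc 0 (cloverArcLength m 1), x = cloverArcLength m (φ x))
    (hφ01 : ∀ x ∈ Icc 0 (cloverArcLength m 1), φ x ∈ Icc (0 : ℝ) 1) {r : ℝ}
    (hr : r ∈ Icc 0 1) : φ (cloverArcLength m r) = r := by
  have hmono := strictMonoOn_cloverArcLength hm
  have hlr : cloverArcLength m r ∈ Icc 0 (cloverArcLength m 1) := by
    rw [← cloverArcLength_zero (m := m)]
    exact ⟨hmono.monotoneOn ⟨le_rfl, zero_le_one⟩ hr hr.1,
      hmono.monotoneOn hr ⟨zero_le_one, le_rfl⟩ hr.2⟩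
  exact hmono.injOn (hφ01 _ hlr) hr (hφ _ hlr).symm

theorem intervalIntegrable_and_integral_clover_pow_half (hm : 1 ≤ m)
    (hφ : ∀ x ∈ Icc 0 (cloverArcLength m 1), x = cloverArcLength m (φ x))
    (hφ01 : ∀ x ∈ Icc 0 (cloverArcLength m 1), φ x ∈ Icc (0 : ℝ) 1) (k : ℕ) :
    IntervalIntegrable (fun x => φ x ^ k) volume 0 (cloverArcLength m 1) ∧
      ∫ x in 0..cloverArcLength m 1, φ x ^ k = cloverMoment m k := by
  have hL := (cloverArcLength_one_pos hm).le
  have hsubst : EqOn (fun r => (1 - r ^ m) ^ (-(1 / 2) : ℝ) * φ (cloverArcLength m r) ^ k)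
      (fun r => r ^ k * (1 - r ^ m) ^ (-(1 / 2) : ℝ)) (Ioo 0 1) := fun r hr => by
    dsimp only
    rw [clover_cloverArcLength hm hφ hφ01 (Ioo_subset_Icc_self hr), mul_comm]
  constructor
  · rw [intervalIntegrable_iff_integrableOn_Ioo_of_le hL,
      integrableOn_Ioo_iff_integrableOn_comp_cloverArcLength hm,
      integrableOn_congr_fun hsubst measurableSet_Ioo,
      ← intervalIntegrable_iff_integrableOn_Ioo_of_le zero_le_one]
    exact intervalIntegrable_cloverMoment_integrand hm k
  · rw [integral_of_le hL, integral_Ioc_eq_integral_Ioo,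
      integral_Ioo_eq_integral_comp_cloverArcLength hm,
      setIntegral_congr_fun measurableSet_Ioo hsubst, cloverMoment, integral_of_le zero_le_one,
      integral_Ioc_eq_integral_Ioo]

theorem integral_clover_pow {ϖ : ℝ} (hm : 1 ≤ m) (hϖ : ϖ = 2 * cloverArcLength m 1)
    (hφ : ∀ x ∈ Icc 0 (ϖ / 2), x = cloverArcLength m (φ x))
    (hφ01 : ∀ x ∈ Icc 0 (ϖ / 2), φ x ∈ Icc (0 : ℝ) 1)
    (hφsymm : ∀ x ∈ Icc 0 ϖ, φ (ϖ - x) = φ x) (k : ℕ) :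
    ∫ x in 0..ϖ, φ x ^ k = 2 * cloverMoment m k := by
  have hhalf : ϖ / 2 = cloverArcLength m 1 := by rw [hϖ]; ring
  rw [hhalf] at hφ hφ01
  obtain ⟨hint, hintegral⟩ := intervalIntegrable_and_integral_clover_pow_half hm hφ hφ01 k
  have hϖ0 : 0 ≤ ϖ := by linarith [cloverArcLength_one_pos hm]
  rw [integral_eq_two_mul_integral_half_of_symm hϖ0 (fun x hx => by rw [hφsymm x hx])
    (hhalf ▸ hint), hhalf, hintegral]

end CloverFunction

/-- **Explicit formula for `I_m(mn - 1)`.**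
Let `m ≥ 1`, `ϖ = 2 ∫_0^1 (1 - t^m)^(-1/2) dt`, `φ` the `m`-clover function, and
`I(n) = ∫_0^ϖ φ(x)^n dx`.  Then for all `n ≥ 1`,
`I(mn - 1) Γ_2(n, 1) = Γ_2(n, 0) (4/m)`. -/
theorem clover_integral_formula_mn_sub_one (m : ℕ) (hm : 1 ≤ m)
    (ϖ : ℝ) (hϖ : ϖ = 2 * ∫ t in (0:ℝ)..1, (1 - t ^ m) ^ (-(1/2) : ℝ))
    (φ : ℝ → ℝ)
    (hφ : ∀ x ∈ Set.Icc 0 (ϖ / 2),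
      x = ∫ t in (0:ℝ)..(φ x), (1 - t ^ m) ^ (-(1/2) : ℝ))
    (hφ01 : ∀ x ∈ Set.Icc 0 (ϖ / 2), φ x ∈ Set.Icc (0:ℝ) 1)
    (hφsymm : ∀ x ∈ Set.Icc 0 ϖ, φ (ϖ - x) = φ x)
    (I : ℕ → ℝ) (hI : ∀ n : ℕ, I n = ∫ x in (0:ℝ)..ϖ, φ x ^ n) :
    ∀ n : ℕ, 1 ≤ n →
      I (m * n - 1) * congGamma2 n 1 = congGamma2 n 0 * (4 / m) := by
  intro n hn
  rw [hI, integral_clover_pow hm hϖ hφ hφ01 hφsymm, mul_assoc, cloverMoment_mul_sub_one hm n hn]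
  ring
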